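/- arXiv:1810.02510 — 2 statements merged into one kernel-verified Lean document; each statement's English description precedes it below -/
import Mathlib

section
/- Let M ≥ 2 be an integer, ζ ∈ (0, 2/M], and suppose |cos φ − cos(φ − Δφ)| ≤ ζ with |Δφ| ≤ ζ. Then the beamforming gain magnitude |c| = (1/√M)|sin((M/2)π(cos φ − cos(φ−Δφ)))/sin((π/2)(cos φ − cos(φ−Δφ)))| satisfies |c| ≥ √M · sinc((M/2)πζ), where sinc(t) = sin(t)/t (sinc(0)=1). -/
open Real

/-- `sinc t = sin t / t` for `t ≠ 0`, `sinc 0 = 1`. -/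
noncomputable def sinc (t : ℝ) : ℝ := if t = 0 then 1 else Real.sin t / t

/-!
Writing `x = πδ/2`, the gain sum is the geometric sum `∑_{n<M} z^n` with `z = exp (2ix)`, and
multiplying by `z - 1` gives the Dirichlet-kernel identity `‖∑ z^n‖ · |sin x| = |sin (Mx)|`.
Since `|sin x| ≤ |x|` and `|sin (Mx)| = M|x| · |sinc (Mx)|`, the sum has norm at least
`M |sinc (Mx)|`, and `sinc`, being a secant slope of the concave function `sin` on `[0, π]`,
decreases there, so `|sinc (Mx)| ≥ sinc (Mπζ/2)` as long as `M|x| ≤ Mπζ/2 ≤ π`.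
-/

theorem sinc_eq_real_sinc : _root_.sinc = Real.sinc := rfl

theorem Real.sinc_abs (t : ℝ) : Real.sinc |t| = Real.sinc t := by
  rcases abs_choice t with h | h <;> simp [h]

theorem Real.mul_sinc (t : ℝ) : t * Real.sinc t = Real.sin t := by
  rcases eq_or_ne t 0 with rfl | ht
  · simp
  · rw [sinc_of_ne_zero ht, mul_div_cancel₀ _ ht]

theorem Real.sinc_antitoneOn : AntitoneOn Real.sinc (Set.Icc 0 π) := by
  intro s hs t ht hst
  rcases eq_or_lt_of_le hs.1 with rfl | hs0
  · simpa using sinc_le_one t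
  have hsec := strictConcaveOn_sin_Icc.concaveOn.neg.secant_mono
    (Set.left_mem_Icc.2 pi_pos.le) hs ht hs0.ne' (hs0.trans_le hst).ne' hst
  simp only [Pi.neg_apply, sin_zero, neg_zero, sub_zero, neg_div, neg_le_neg_iff] at hsec
  rwa [sinc_of_ne_zero hs0.ne', sinc_of_ne_zero (hs0.trans_le hst).ne']

theorem Real.sinc_le_abs_sinc {t b : ℝ} (htb : |t| ≤ b) (hb : b ≤ π) :
    Real.sinc b ≤ |Real.sinc t| := by
  rw [← sinc_abs t]
  exact (sinc_antitoneOn ⟨abs_nonneg t, htb.trans hb⟩ ⟨(abs_nonneg t).trans htb, hb⟩ htb).trans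
    (le_abs_self _)

section

open Complex

theorem norm_exp_two_mul_I_sub_one (y : ℝ) : ‖exp (2 * y * I) - 1‖ = 2 * |Real.sin y| := by
  rw [show (2 * y * I : ℂ) = I * (2 * y : ℝ) by push_cast; ring, norm_exp_I_mul_ofReal_sub_one,
    norm_mul, Real.norm_eq_abs, mul_div_cancel_left₀ y two_ne_zero]
  norm_num

theorem norm_sum_exp_mul_abs_sin (M : ℕ) (x : ℝ) :
    ‖∑ n ∈ Finset.range M, exp (2 * n * x * I)‖ * |Real.sin x| = |Real.sin (M * x)| := by
  set z := exp (2 * x * I)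
  have hpow (k : ℕ) : exp (2 * k * x * I) = z ^ k := by
    rw [← Complex.exp_nat_mul]; ring_nf
  have hzM : z ^ M = exp (2 * (M * x : ℝ) * I) := by
    rw [← hpow]; push_cast; ring_nf
  have hgeom := congrArg norm (geom_sum_mul z M)
  rw [norm_mul, hzM, norm_exp_two_mul_I_sub_one, norm_exp_two_mul_I_sub_one,
    ← Finset.sum_congr rfl fun k _ => hpow k] at hgeom
  linarith

theorem mul_abs_sinc_le_norm_sum_exp (M : ℕ) (x : ℝ) :
    M * |Real.sinc (M * x)| ≤ ‖∑ n ∈ Finset.range M, exp (2 * n * x * I)‖ := by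
  rcases eq_or_ne (Real.sin x) 0 with hsin | hsin
  · have hz : exp (2 * x * I) = 1 := by
      rw [← sub_eq_zero, ← norm_eq_zero, norm_exp_two_mul_I_sub_one, hsin, abs_zero, mul_zero]
    have hterm (n : ℕ) : exp (2 * n * x * I) = 1 := by
      rw [show (2 * n * x * I : ℂ) = n * (2 * x * I) by ring, Complex.exp_nat_mul, hz, one_pow]
    simp only [hterm, Finset.sum_const, Finset.card_range, nsmul_eq_mul, mul_one,
      Complex.norm_natCast]
    exact mul_le_of_le_one_right M.cast_nonneg (abs_sinc_le_one _)
  · refine le_of_mul_le_mul_right ?_ (abs_pos.2 hsin)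
    calc M * |Real.sinc (M * x)| * |Real.sin x| ≤ M * |Real.sinc (M * x)| * |x| :=
          mul_le_mul_of_nonneg_left abs_sin_le_abs (by positivity)
      _ = |Real.sin (M * x)| := by
          rw [← Real.mul_sinc (M * x), abs_mul, abs_mul, Nat.abs_cast]; ring
      _ = _ := (norm_sum_exp_mul_abs_sin M x).symm

end

theorem stmt4_general (M : ℕ) (ζ φ Δφ : ℝ) (hζ0 : 0 < ζ) (hζ : ζ ≤ 2 / M)
    (hδ : |Real.cos φ - Real.cos (φ - Δφ)| ≤ ζ) :
    (1 / Real.sqrt M) * ‖(∑ n ∈ Finset.range M,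
        Complex.exp (Complex.I * n * π * (Real.cos φ - Real.cos (φ - Δφ))))‖
      ≥ Real.sqrt M * _root_.sinc (M * π * ζ / 2) := by
  have hM : (0 : ℝ) < M := by
    rcases Nat.eq_zero_or_pos M with rfl | hM
    · simp only [CharP.cast_eq_zero, div_zero] at hζ; linarith
    · exact_mod_cast hM
  set x := π * (Real.cos φ - Real.cos (φ - Δφ)) / 2 with hx
  have hsum : ∑ n ∈ Finset.range M,
      Complex.exp (Complex.I * n * π * (Real.cos φ - Real.cos (φ - Δφ))) =
      ∑ n ∈ Finset.range M, Complex.exp (2 * n * x * Complex.I) := by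
    refine Finset.sum_congr rfl fun n _ => congrArg Complex.exp ?_
    rw [hx]; push_cast; ring
  have hMx : |M * x| ≤ M * π * ζ / 2 := by
    rw [hx, abs_mul, abs_div, abs_mul, abs_of_pos hM, abs_of_pos pi_pos, abs_two]
    have := mul_le_mul_of_nonneg_left hδ (mul_pos hM pi_pos).le
    linarith
  have hMζ : M * π * ζ / 2 ≤ π := by
    have := (le_div_iff₀ hM).1 hζ
    nlinarith [pi_pos]
  rw [hsum, ge_iff_le, sinc_eq_real_sinc]
  calc √M * Real.sinc (M * π * ζ / 2) = 1 / √M * (M * Real.sinc (M * π * ζ / 2)) := by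
        rw [← mul_assoc, one_div_mul_eq_div, div_sqrt]
    _ ≤ 1 / √M * (M * |Real.sinc (M * x)|) := by
        gcongr; exact sinc_le_abs_sinc hMx hMζ
    _ ≤ _ := by gcongr; exact mul_abs_sinc_le_norm_sum_exp M x

/-- Lower bound on the beamforming gain magnitude: with `M ≥ 2`, `ζ ∈ (0, 2/M]`,
`|Δφ| ≤ ζ` and `|cos φ − cos (φ − Δφ)| ≤ ζ`, the gain
`c = (1/√M) ∑_{n<M} exp (i n π (cos φ − cos (φ − Δφ)))`
satisfies `|c| ≥ √M · sinc (Mπζ/2)`. -/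
theorem stmt4 (M : ℕ) (hM : 2 ≤ M) (ζ φ Δφ : ℝ) (hζ0 : 0 < ζ) (hζ : ζ ≤ 2 / M)
    (hΔ : |Δφ| ≤ ζ) (hδ : |Real.cos φ - Real.cos (φ - Δφ)| ≤ ζ) :
    (1 / Real.sqrt M) * ‖(∑ n ∈ Finset.range M,
        Complex.exp (Complex.I * n * π * (Real.cos φ - Real.cos (φ - Δφ))))‖
      ≥ Real.sqrt M * _root_.sinc (M * π * ζ / 2) :=
  stmt4_general M ζ φ Δφ hζ0 hζ hδ
end

section
/- Let θ, θ', θ'' be mutually independent uniform [0,π] random variables and h(θ) = (e^{j n π cos θ})_{n=0}^{N−1}. Then E[ h(θ)^H h(θ') · h(θ')^H h(θ'') ] = Σ_{n=0}^{N−1} J_0(nπ)^2 + 2 Σ_{m=1}^{N−1} Σ_{n=0}^{N−m−1} J_0(mπ) J_0(nπ) J_0((n+m)π). -/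
/-
Expanding the product, the term indexed by `(n, m)` is
`e^{-jnπ cos θ} e^{j(n-m)π cos θ'} e^{jmπ cos θ''}`, so the triple integral splits into three
one-dimensional integrals `∫₀^π e^{jz cos x} dx = π J₀(z)` (the sine part vanishes under
`x ↦ π - x`). Since `J₀` is even, the resulting double sum `∑_{n,m} J₀(nπ) J₀((n-m)π) J₀(mπ)` is
symmetric in `(n, m)`: it is its diagonal plus twice the part above the diagonal, whose terms are
indexed by `m = n + d` with `d ≥ 1`.
-/

open Real MeasureTheory

/-- Bessel function of the first kind of order zero. -/
noncomputable def J0 (z : ℝ) : ℝ := (1 / π) * ∫ x in (0:ℝ)..π, Real.cos (z * Real.cos x)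

open Finset

lemma J0_neg (z : ℝ) : J0 (-z) = J0 z := by
  simp only [J0, neg_mul, Real.cos_neg]

lemma J0_zero : J0 0 = 1 := by
  simp [J0, Real.pi_ne_zero]

lemma pi_mul_J0 (z : ℝ) : π * J0 z = ∫ x in (0:ℝ)..π, Real.cos (z * Real.cos x) := by
  rw [J0, ← mul_assoc, mul_one_div_cancel Real.pi_ne_zero, one_mul]

lemma integral_sin_mul_cos_eq_zero (z : ℝ) :
    ∫ x in (0:ℝ)..π, Real.sin (z * Real.cos x) = 0 := by
  have h := intervalIntegral.integral_comp_sub_left (a := 0) (b := π)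
    (fun x => Real.sin (z * Real.cos x)) π
  simp only [Real.cos_pi_sub, mul_neg, Real.sin_neg, intervalIntegral.integral_neg, sub_zero,
    sub_self] at h
  linarith

lemma integral_exp_I_mul_cos (z : ℝ) :
    ∫ x in (0:ℝ)..π, Complex.exp (Complex.I * z * Real.cos x) = π * J0 z := by
  have hexp (x : ℝ) : Complex.exp (Complex.I * z * Real.cos x)
      = ((Real.cos (z * Real.cos x) : ℝ) : ℂ)
        + ((Real.sin (z * Real.cos x) : ℝ) : ℂ) * Complex.I := by
    rw [show Complex.I * z * Real.cos x = ((z * Real.cos x : ℝ) : ℂ) * Complex.I by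
        push_cast; ring,
      Complex.exp_mul_I, Complex.ofReal_cos, Complex.ofReal_sin]
  simp_rw [hexp]
  rw [intervalIntegral.integral_add (by apply Continuous.intervalIntegrable; fun_prop)
      (by apply Continuous.intervalIntegrable; fun_prop),
    intervalIntegral.integral_mul_const, intervalIntegral.integral_ofReal,
    intervalIntegral.integral_ofReal, integral_sin_mul_cos_eq_zero, ← pi_mul_J0]
  push_cast; ring

theorem integral_integral_integral_finsetSum_mul_mul {𝕜 ι : Type*} [RCLike 𝕜] (s : Finset ι)
    {a b : ℝ} {f g h : ι → ℝ → 𝕜} (hf : ∀ i ∈ s, IntervalIntegrable (f i) volume a b)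
    (hg : ∀ i ∈ s, IntervalIntegrable (g i) volume a b)
    (hh : ∀ i ∈ s, IntervalIntegrable (h i) volume a b) :
    ∫ x in a..b, ∫ y in a..b, ∫ z in a..b, ∑ i ∈ s, f i x * g i y * h i z
      = ∑ i ∈ s, (∫ x in a..b, f i x) * (∫ y in a..b, g i y) * ∫ z in a..b, h i z := by
  have hz (x y : ℝ) : ∫ z in a..b, ∑ i ∈ s, f i x * g i y * h i z
      = ∑ i ∈ s, f i x * g i y * ∫ z in a..b, h i z := by
    rw [intervalIntegral.integral_finsetSum fun i hi => (hh i hi).const_mul _]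
    simp only [intervalIntegral.integral_const_mul]
  have hy (x : ℝ) : ∫ y in a..b, ∑ i ∈ s, f i x * g i y * ∫ z in a..b, h i z
      = ∑ i ∈ s, f i x * (∫ y in a..b, g i y) * ∫ z in a..b, h i z := by
    rw [intervalIntegral.integral_finsetSum fun i hi => ((hg i hi).const_mul _).mul_const _]
    simp only [intervalIntegral.integral_const_mul, intervalIntegral.integral_mul_const]
  simp only [hz, hy]
  rw [intervalIntegral.integral_finsetSum fun i hi => ((hf i hi).mul_const _).mul_const _]
  simp only [intervalIntegral.integral_mul_const]

theorem sum_Ico_sum_range_sub_eq_sum_range_sum_range {M : Type*} [AddCommMonoid M]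
    (f : ℕ → ℕ → M) (N : ℕ) :
    ∑ d ∈ Ico 1 N, ∑ n ∈ range (N - d), f n (n + d)
      = ∑ m ∈ range N, ∑ n ∈ range m, f n m := by
  rw [sum_sigma', sum_sigma']
  refine sum_bij' (fun p _ => ⟨p.2 + p.1, p.2⟩) (fun p _ => ⟨p.1 - p.2, p.2⟩) ?_ ?_ ?_ ?_ ?_
  all_goals
    rintro ⟨d, n⟩ hp
    simp only [mem_sigma, mem_Ico, mem_range] at hp ⊢
  all_goals first | omega | (congr 1; omega)

theorem sum_range_sum_range_of_symm {M : Type*} [AddCommMonoid M] (f : ℕ → ℕ → M)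
    (hf : ∀ n m, f n m = f m n) (N : ℕ) :
    ∑ n ∈ range N, ∑ m ∈ range N, f n m
      = ∑ n ∈ range N, f n n + 2 • ∑ m ∈ range N, ∑ n ∈ range m, f n m := by
  induction N with
  | zero => simp
  | succ N ih =>
    simp only [sum_range_succ, sum_add_distrib, ih, smul_add, hf N]
    abel

lemma sum_range_sum_range_J0 (N : ℕ) :
    ∑ n ∈ range N, ∑ m ∈ range N, J0 (n * π) * J0 ((n - m) * π) * J0 (m * π)
      = ∑ n ∈ range N, (J0 (n * π))^2
          + 2 * ∑ m ∈ Ico 1 N, ∑ n ∈ range (N - m),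
              J0 (m * π) * J0 (n * π) * J0 ((n + m) * π) := by
  have hsymm (n m : ℕ) : J0 (n * π) * J0 ((n - m) * π) * J0 (m * π)
      = J0 (m * π) * J0 ((m - n) * π) * J0 (n * π) := by
    rw [← J0_neg ((m - n) * π), ← neg_mul, neg_sub]; ring
  rw [sum_range_sum_range_of_symm _ hsymm, ← sum_Ico_sum_range_sub_eq_sum_range_sum_range,
    nsmul_eq_mul, Nat.cast_ofNat]
  congr 1
  · refine sum_congr rfl fun n _ => ?_
    rw [sub_self, zero_mul, J0_zero]; ring
  · refine congrArg _ (sum_congr rfl fun m _ => sum_congr rfl fun n _ => ?_)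
    rw [Nat.cast_add, show ((n : ℝ) - (n + m)) * π = -(m * π) by ring, J0_neg]; ring

/-- For mutually independent `θ, θ', θ''` uniform on `[0, π]` and
`h(θ) = (e^{i n π cos θ})_{n<N}`,
`E[h(θ)ᴴ h(θ') · h(θ')ᴴ h(θ'')] = ∑_{n<N} J₀(nπ)²
  + 2 ∑_{m=1}^{N−1} ∑_{n=0}^{N−m−1} J₀(mπ) J₀(nπ) J₀((n+m)π)`. -/
theorem stmt7 (N : ℕ) :
    (1 / (π : ℂ)^3) * ∫ θ in (0:ℝ)..π, ∫ θ' in (0:ℝ)..π, ∫ θ'' in (0:ℝ)..π,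
        (∑ n ∈ Finset.range N,
            Complex.exp (Complex.I * n * π * (Real.cos θ' - Real.cos θ))) *
        (∑ m ∈ Finset.range N,
            Complex.exp (Complex.I * m * π * (Real.cos θ'' - Real.cos θ')))
      = ((∑ n ∈ Finset.range N, (J0 (n * π))^2
          + 2 * ∑ m ∈ Finset.Ico 1 N, ∑ n ∈ Finset.range (N - m),
              J0 (m * π) * J0 (n * π) * J0 ((n + m) * π) : ℝ) : ℂ) := by
  have hsplit (θ θ' θ'' : ℝ) :
      (∑ n ∈ range N, Complex.exp (Complex.I * n * π * (Real.cos θ' - Real.cos θ))) *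
        (∑ m ∈ range N, Complex.exp (Complex.I * m * π * (Real.cos θ'' - Real.cos θ')))
      = ∑ p ∈ range N ×ˢ range N,
          Complex.exp (Complex.I * ((-(p.1 * π) : ℝ) : ℂ) * Real.cos θ)
            * Complex.exp (Complex.I * (((p.1 - p.2) * π : ℝ) : ℂ) * Real.cos θ')
            * Complex.exp (Complex.I * ((p.2 * π : ℝ) : ℂ) * Real.cos θ'') := by
    rw [sum_mul_sum, sum_product]
    refine sum_congr rfl fun n _ => sum_congr rfl fun m _ => ?_
    simp only [← Complex.exp_add]
    congr 1; push_cast; ring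
  have hphase (z : ℝ) : IntervalIntegrable (fun x : ℝ => Complex.exp (Complex.I * z * Real.cos x))
      volume 0 π := by
    apply Continuous.intervalIntegrable; fun_prop
  simp_rw [hsplit]
  rw [integral_integral_integral_finsetSum_mul_mul _ (fun _ _ => hphase _) (fun _ _ => hphase _)
    (fun _ _ => hphase _)]
  simp only [integral_exp_I_mul_cos, J0_neg]
  rw [← sum_range_sum_range_J0, sum_product]
  have hπ : (π : ℂ) ≠ 0 := Complex.ofReal_ne_zero.mpr Real.pi_ne_zero
  push_cast
  simp only [mul_sum]
  refine sum_congr rfl fun n _ => sum_congr rfl fun m _ => ?_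
  field_simp
end
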